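/- Let ω : ℕ → V be an infinite path (ω 0 = v₀ and ω (k+1) ∈ succ (ω k) for all k), and suppose there are real numbers m_k ≥ 1 with m_k = 1 for all but finitely many k, such that |a (ω k) (ω (k+1))| ≤ m_k / √2 for every k (as holds for the complex percolation process with percolation constant r = 1/2 + i/2, where m_k is the multiplicity of the k-th transition and |r| = |1−r| = 1/√2). Then lim_{n→∞} a_n(ω|_n) = 0, where ω|_n ∈ Ω_n is the restriction of ω to its first n entries. Consequently the singleton {ω} is beneficial with μ({ω}) = lim_{n→∞} μ_n({ω|_n}) = 0, and its complement satisfies lim_{n→∞} μ_n(Ω_n \ {ω|_n}) = 1. -/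

import Mathlib

variable {V : Type*} [Fintype V] [DecidableEq V]

/-- An `n`-path: `ω 0 = v₀` and each entry is a successor of the previous one. -/
def IsPath (v₀ : V) (succ : V → Finset V) (n : ℕ) (ω : Fin n → V) : Prop :=
  (∀ i : Fin n, (i : ℕ) = 0 → ω i = v₀) ∧
    ∀ i j : Fin n, (j : ℕ) = (i : ℕ) + 1 → ω j ∈ succ (ω i)

instance (v₀ : V) (succ : V → Finset V) (n : ℕ) :
    DecidablePred (IsPath v₀ succ n) := fun ω => by
  unfold IsPath; infer_instance

/-- `Ω_n`, the finite set of `n`-paths. -/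
def pathSet (v₀ : V) (succ : V → Finset V) (n : ℕ) : Finset (Fin n → V) :=
  Finset.univ.filter (IsPath v₀ succ n)

/-- The amplitude `a_n(ω) = ∏_{k=0}^{n-2} a (ω k) (ω (k+1))`. -/
noncomputable def amp (a : V → V → ℂ) (n : ℕ) (ω : Fin n → V) : ℂ :=
  ∏ k : Fin (n - 1),
    a (ω ⟨k.1, by have := k.2; omega⟩) (ω ⟨k.1 + 1, by have := k.2; omega⟩)

/-- The decoherence functional `D_n(A,B) = (∑_{ω ∈ A} a_n(ω)) ⬝ conj (∑_{ω' ∈ B} a_n(ω'))`. -/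
noncomputable def Dfun (a : V → V → ℂ) (n : ℕ) (A B : Finset (Fin n → V)) : ℂ :=
  (∑ ω ∈ A, amp a n ω) * (starRingEnd ℂ) (∑ ω ∈ B, amp a n ω)

/-- The `q`-measure `μ_n(A) = |∑_{ω ∈ A} a_n(ω)|²`. -/
noncomputable def qMeas (a : V → V → ℂ) (n : ℕ) (A : Finset (Fin n → V)) : ℝ :=
  Complex.normSq (∑ ω ∈ A, amp a n ω)

/-- The one-step extension `A→ = {ω ∈ Ω_{n+1} : ω|_{Fin n} ∈ A}`. -/
def ext (v₀ : V) (succ : V → Finset V) {n : ℕ} (A : Finset (Fin n → V)) :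
    Finset (Fin (n + 1) → V) :=
  (pathSet v₀ succ (n + 1)).filter (fun ω => (fun k : Fin n => ω k.castSucc) ∈ A)

/-- An infinite path: `ω 0 = v₀` and each entry is a successor of the previous. -/
def IsInfPath (v₀ : V) (succ : V → Finset V) (ω : ℕ → V) : Prop :=
  ω 0 = v₀ ∧ ∀ k : ℕ, ω (k + 1) ∈ succ (ω k)

/-!
Along `ω` all but finitely many transitions have modulus at most `1/√2`, so `|a_n(ω|_n)|` decays
geometrically. The amplitudes of all `n`-paths sum to `1` (sum out the last step, using
`∑_y a x y = 1`), so the complement of `{ω|_n}` has total amplitude `1 - a_n(ω|_n) → 1`.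
-/

open Finset Filter Topology

section Paths

variable (v₀ : V) (succ : V → Finset V)

omit [Fintype V] [DecidableEq V] in
theorem isPath_succ_iff {n : ℕ} (ω : Fin (n + 1) → V) :
    IsPath v₀ succ (n + 1) ω ↔ ω 0 = v₀ ∧ ∀ i : Fin n, ω i.succ ∈ succ (ω i.castSucc) := by
  unfold IsPath
  constructor
  · rintro ⟨h0, hs⟩
    exact ⟨h0 0 rfl, fun i => hs _ _ rfl⟩
  · rintro ⟨h0, hs⟩
    refine ⟨fun i hi => ?_, fun i j hj => ?_⟩
    · rwa [show i = 0 from Fin.ext hi]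
    · obtain ⟨k, rfl⟩ : ∃ k : Fin n, i = k.castSucc := ⟨⟨i, by omega⟩, rfl⟩
      rw [show j = k.succ from Fin.ext hj]
      exact hs k

omit [Fintype V] [DecidableEq V] in
theorem isPath_snoc_iff {n : ℕ} (ρ : Fin (n + 1) → V) (y : V) :
    IsPath v₀ succ (n + 2) (Fin.snoc ρ y) ↔
      IsPath v₀ succ (n + 1) ρ ∧ y ∈ succ (ρ (Fin.last n)) := by
  rw [isPath_succ_iff, isPath_succ_iff, Fin.forall_fin_succ']
  simp [-Fin.castSucc_succ, Fin.succ_castSucc, and_assoc]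

theorem pathSet_one : pathSet v₀ succ 1 = {fun _ => v₀} := by
  ext ω
  simp only [pathSet, IsPath, mem_filter, mem_univ, true_and, mem_singleton]
  constructor
  · rintro ⟨h0, -⟩
    exact funext fun i => h0 i (Fin.val_eq_zero i)
  · rintro rfl
    exact ⟨fun _ _ => rfl, fun i j hj => by omega⟩

theorem sum_pathSet_succ_succ {M : Type*} [AddCommMonoid M] (n : ℕ)
    (f : (Fin (n + 2) → V) → M) :
    ∑ ω ∈ pathSet v₀ succ (n + 2), f ω =
      ∑ ρ ∈ pathSet v₀ succ (n + 1), ∑ y ∈ succ (ρ (Fin.last n)), f (Fin.snoc ρ y) := by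
  rw [pathSet, sum_filter, ← (Fin.snocEquiv _).sum_comp, Fintype.sum_prod_type_right]
  simp only [Fin.snocEquiv, Equiv.coe_fn_mk]
  simp [isPath_snoc_iff, ite_and, sum_filter, pathSet]

end Paths

theorem mem_pathSet_restrict {v₀ : V} {succ : V → Finset V} {ω : ℕ → V}
    (hω : IsInfPath v₀ succ ω) (n : ℕ) : (fun i : Fin n => ω i) ∈ pathSet v₀ succ n := by
  simp only [pathSet, mem_filter, mem_univ, true_and]
  refine ⟨fun i hi => ?_, fun i j hj => ?_⟩
  · simpa only [hi] using hω.1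
  · simpa only [hj] using hω.2 i

section Amplitudes

variable (a : V → V → ℂ)

omit [Fintype V] [DecidableEq V] in
theorem amp_one (ω : Fin 1 → V) : amp a 1 ω = 1 := by
  simp [amp]

omit [Fintype V] [DecidableEq V] in
theorem amp_snoc {n : ℕ} (ρ : Fin (n + 1) → V) (y : V) :
    amp a (n + 2) (Fin.snoc ρ y) = amp a (n + 1) ρ * a (ρ (Fin.last n)) y :=
  (Fin.prod_univ_castSucc (n := n) _).trans (by simp [amp, Fin.snoc, Fin.last])

theorem sum_amp_pathSet (v₀ : V) (succ : V → Finset V) (ha : ∀ x, ∑ y ∈ succ x, a x y = 1)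
    (n : ℕ) : ∑ ω ∈ pathSet v₀ succ n, amp a n ω = 1 := by
  induction n with
  | zero =>
    rw [pathSet, filter_true_of_mem fun ω _ => ⟨fun i => i.elim0, fun i => i.elim0⟩]
    simp [amp]
  | succ n ih =>
    cases n with
    | zero => simp [pathSet_one, amp_one]
    | succ n =>
      rw [sum_pathSet_succ_succ]
      simp_rw [amp_snoc, ← mul_sum, ha, mul_one]
      exact ih

omit [Fintype V] [DecidableEq V] in
theorem qMeas_singleton {n : ℕ} (ω : Fin n → V) :
    qMeas a n {ω} = Complex.normSq (amp a n ω) := by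
  rw [qMeas, sum_singleton]

theorem qMeas_pathSet_erase (v₀ : V) (succ : V → Finset V) (ha : ∀ x, ∑ y ∈ succ x, a x y = 1)
    {n : ℕ} {ρ : Fin n → V} (hρ : ρ ∈ pathSet v₀ succ n) :
    qMeas a n ((pathSet v₀ succ n).erase ρ) = Complex.normSq (1 - amp a n ρ) := by
  rw [qMeas, ← sum_amp_pathSet a v₀ succ ha n, ← add_sum_erase _ _ hρ, add_sub_cancel_left]

omit [Fintype V] [DecidableEq V] in
theorem norm_amp_restrict (ω : ℕ → V) (n : ℕ) :
    ‖amp a n (fun i : Fin n => ω i)‖ = ∏ k ∈ range (n - 1), ‖a (ω k) (ω (k + 1))‖ := by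
  rw [amp, norm_prod]
  exact Fin.prod_univ_eq_prod_range (fun k => ‖a (ω k) (ω (k + 1))‖) (n - 1)

end Amplitudes

theorem tendsto_prod_range_zero_of_eventually_le {x : ℕ → ℝ} {c : ℝ} (hx : ∀ k, 0 ≤ x k)
    (hc : c < 1) (h : ∀ᶠ k in atTop, x k ≤ c) :
    Tendsto (fun n => ∏ k ∈ range n, x k) atTop (𝓝 0) := by
  obtain ⟨N, hN⟩ := eventually_atTop.1 h
  have hc0 : 0 ≤ c := (hx N).trans (hN N le_rfl)
  set P := ∏ k ∈ range N, x k
  have hbound (n : ℕ) : ∏ k ∈ range (n + N), x k ≤ P * c ^ n := by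
    rw [add_comm, prod_range_add]
    gcongr
    · exact prod_nonneg fun k _ => hx k
    · calc ∏ k ∈ range n, x (N + k) ≤ ∏ _k ∈ range n, c :=
            prod_le_prod (fun k _ => hx _) fun k _ => hN _ (Nat.le_add_right N k)
        _ = c ^ n := by rw [prod_const, card_range]
  rw [← tendsto_add_atTop_iff_nat N]
  refine squeeze_zero (fun n => prod_nonneg fun k _ => hx k) hbound ?_
  simpa using (tendsto_pow_atTop_nhds_zero_of_lt_one hc0 hc).const_mul P

omit [Fintype V] [DecidableEq V] in
theorem tendsto_amp_restrict_zero (a : V → V → ℂ) (ω : ℕ → V) {c : ℝ} (hc : c < 1)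
    (h : ∀ᶠ k in atTop, ‖a (ω k) (ω (k + 1))‖ ≤ c) :
    Tendsto (fun n => amp a n (fun i : Fin n => ω i)) atTop (𝓝 0) := by
  rw [tendsto_zero_iff_norm_tendsto_zero]
  simp_rw [norm_amp_restrict]
  exact (tendsto_prod_range_zero_of_eventually_le (fun _ => norm_nonneg _) hc h).comp
    (tendsto_sub_atTop_nat 1)

theorem stmt16_general (v₀ : V) (succ : V → Finset V) (a : V → V → ℂ)
    (ha : ∀ x : V, ∑ y ∈ succ x, a x y = 1)
    (ω : ℕ → V) (hω : IsInfPath v₀ succ ω)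
    (m : ℕ → ℝ) (hmfin : {k : ℕ | m k ≠ 1}.Finite)
    (hbound : ∀ k : ℕ, ‖a (ω k) (ω (k + 1))‖ ≤ m k / Real.sqrt 2) :
    Filter.Tendsto (fun n : ℕ => amp a n (fun i : Fin n => ω i))
      Filter.atTop (nhds 0) ∧
    Filter.Tendsto (fun n : ℕ => qMeas a n {fun i : Fin n => ω i})
      Filter.atTop (nhds 0) ∧
    Filter.Tendsto (fun n : ℕ =>
        qMeas a n ((pathSet v₀ succ n).erase (fun i : Fin n => ω i)))
      Filter.atTop (nhds 1) := by
  have hdecay : ∀ᶠ k in atTop, ‖a (ω k) (ω (k + 1))‖ ≤ (√2)⁻¹ := by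
    filter_upwards [Nat.cofinite_eq_atTop ▸ hmfin.eventually_cofinite_notMem] with k hk
    simpa [not_not.1 hk] using hbound k
  have hamp := tendsto_amp_restrict_zero a ω (inv_lt_one_of_one_lt₀ Real.one_lt_sqrt_two) hdecay
  refine ⟨hamp, ?_, ?_⟩
  · simp_rw [qMeas_singleton]
    have := (Complex.continuous_normSq.tendsto _).comp hamp
    rw [map_zero] at this
    exact this
  · simp_rw [qMeas_pathSet_erase a v₀ succ ha (mem_pathSet_restrict hω _)]
    have := (Complex.continuous_normSq.tendsto _).comp (hamp.const_sub 1)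
    rw [sub_zero, map_one] at this
    exact this

/-- If the amplitudes along an infinite path `ω` satisfy
`|a (ω k) (ω (k+1))| ≤ m k / √2` with `m k ≥ 1` and `m k = 1` for all but
finitely many `k` (as for the complex percolation process with
`r = 1/2 + i/2`), then `a_n(ω|_n) → 0`; consequently `{ω}` is beneficial with
`μ({ω}) = lim μ_n({ω|_n}) = 0`, and `lim μ_n(Ω_n \ {ω|_n}) = 1`. -/
theorem stmt16 (v₀ : V) (succ : V → Finset V) (a : V → V → ℂ)
    (ha : ∀ x : V, ∑ y ∈ succ x, a x y = 1)
    (ω : ℕ → V) (hω : IsInfPath v₀ succ ω)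
    (m : ℕ → ℝ) (hm1 : ∀ k, 1 ≤ m k) (hmfin : {k : ℕ | m k ≠ 1}.Finite)
    (hbound : ∀ k : ℕ, ‖a (ω k) (ω (k + 1))‖ ≤ m k / Real.sqrt 2) :
    Filter.Tendsto (fun n : ℕ => amp a n (fun i : Fin n => ω i))
      Filter.atTop (nhds 0) ∧
    Filter.Tendsto (fun n : ℕ => qMeas a n {fun i : Fin n => ω i})
      Filter.atTop (nhds 0) ∧
    Filter.Tendsto (fun n : ℕ =>
        qMeas a n ((pathSet v₀ succ n).erase (fun i : Fin n => ω i)))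
      Filter.atTop (nhds 1) :=
  stmt16_general v₀ succ a ha ω hω m hmfin hbound
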